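/- Let A be a non-unital Banach algebra with a bounded approximate identity. Then A is approximately weakly amenable if and only if its unitization A# is approximately weakly amenable. -/

import Mathlib

open ContinuousLinearMap Filter Topology

open ContinuousLinearMap Filter Topology

/-- A Banach `A`-bimodule: a complete normed `ℂ`-space with commuting continuous
left and right `A`-actions, jointly bounded and bilinear. -/
structure BBimod (A : Type) [NonUnitalNormedRing A] [NormedSpace ℂ A] where
  carrier : Type
  [grp : NormedAddCommGroup carrier]
  [mod : NormedSpace ℂ carrier]
  [complete : CompleteSpace carrier]
  lsmul : A → carrier →L[ℂ] carrier
  rsmul : A → carrier →L[ℂ] carrier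
  lsmul_add : ∀ a b, lsmul (a + b) = lsmul a + lsmul b
  rsmul_add : ∀ a b, rsmul (a + b) = rsmul a + rsmul b
  lsmul_smul : ∀ (c : ℂ) (a), lsmul (c • a) = c • lsmul a
  rsmul_smul : ∀ (c : ℂ) (a), rsmul (c • a) = c • rsmul a
  lsmul_mul : ∀ a b, lsmul (a * b) = (lsmul a).comp (lsmul b)
  rsmul_mul : ∀ a b, rsmul (a * b) = (rsmul b).comp (rsmul a)
  lsmul_rsmul : ∀ a b, (lsmul a).comp (rsmul b) = (rsmul b).comp (lsmul a)
  bound : ∃ C : ℝ, ∀ a, ‖lsmul a‖ ≤ C * ‖a‖ ∧ ‖rsmul a‖ ≤ C * ‖a‖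

attribute [instance] BBimod.grp BBimod.mod BBimod.complete

variable {A : Type} [NonUnitalNormedRing A] [NormedSpace ℂ A]

/-- The dual of a Banach bimodule, with the canonical dual actions
`⟨u, Λ·a⟩ = ⟨a·u, Λ⟩` and `⟨u, a·Λ⟩ = ⟨u·a, Λ⟩`. -/
noncomputable def BBimod.dual (M : BBimod A) : BBimod A where
  carrier := M.carrier →L[ℂ] ℂ
  lsmul a := (compL ℂ M.carrier M.carrier ℂ).flip (M.rsmul a)
  rsmul a := (compL ℂ M.carrier M.carrier ℂ).flip (M.lsmul a)
  lsmul_add a b := by ext Λ x; simp [M.rsmul_add]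
  rsmul_add a b := by ext Λ x; simp [M.lsmul_add]
  lsmul_smul c a := by ext Λ x; simp [M.rsmul_smul]
  rsmul_smul c a := by ext Λ x; simp [M.lsmul_smul]
  lsmul_mul a b := by ext Λ x; simp [M.rsmul_mul]
  rsmul_mul a b := by ext Λ x; simp [M.lsmul_mul]
  lsmul_rsmul a b := by
    ext Λ x
    have h : M.lsmul b (M.rsmul a x) = M.rsmul a (M.lsmul b x) := by
      have := congrArg (fun T : M.carrier →L[ℂ] M.carrier => T x) (M.lsmul_rsmul b a)
      simpa using this
    simp [h]
  bound := by
    obtain ⟨C, hC⟩ := M.bound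
    refine ⟨C, fun a => ⟨?_, ?_⟩⟩
    · refine opNorm_le_bound _ ?_ fun Λ => ?_
      · exact le_trans (norm_nonneg _) (hC a).2
      · calc ‖Λ.comp (M.rsmul a)‖ ≤ ‖Λ‖ * ‖M.rsmul a‖ := opNorm_comp_le _ _
          _ ≤ (C * ‖a‖) * ‖Λ‖ := by
              rw [mul_comm]
              exact mul_le_mul_of_nonneg_right (hC a).2 (norm_nonneg _)
    · refine opNorm_le_bound _ ?_ fun Λ => ?_
      · exact le_trans (norm_nonneg _) (hC a).1
      · calc ‖Λ.comp (M.lsmul a)‖ ≤ ‖Λ‖ * ‖M.lsmul a‖ := opNorm_comp_le _ _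
          _ ≤ (C * ‖a‖) * ‖Λ‖ := by
              rw [mul_comm]
              exact mul_le_mul_of_nonneg_right (hC a).1 (norm_nonneg _)

variable (A) [IsScalarTower ℂ A A] [SMulCommClass ℂ A A] [CompleteSpace A]

/-- `A` as a Banach bimodule over itself. -/
noncomputable def BBimod.base : BBimod A where
  carrier := A
  lsmul a := ContinuousLinearMap.mul ℂ A a
  rsmul a := (ContinuousLinearMap.mul ℂ A).flip a
  lsmul_add a b := by ext x; simp [add_mul]
  rsmul_add a b := by ext x; simp [mul_add]
  lsmul_smul c a := by ext x; simp [smul_mul_assoc]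
  rsmul_smul c a := by ext x; simp [mul_smul_comm]
  lsmul_mul a b := by ext x; simp [mul_assoc]
  rsmul_mul a b := by ext x; simp [mul_assoc]
  lsmul_rsmul a b := by ext x; simp [mul_assoc]
  bound := by
    refine ⟨1, fun a => ⟨?_, ?_⟩⟩
    · simpa using ContinuousLinearMap.opNorm_mul_apply_le ℂ A a
    · refine le_trans (opNorm_le_bound _ (norm_nonneg a) fun x => ?_) (by simp)
      simpa [mul_comm] using norm_mul_le x a


/-- The `n`-th dual `A^(n)` of `A` as a Banach `A`-bimodule. -/
noncomputable def iterDual : ℕ → BBimod A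
  | 0 => BBimod.base A
  | n + 1 => (iterDual n).dual

variable {A}

/-- `D` is a derivation from `A` into the Banach bimodule `M`. -/
def IsDerivation (M : BBimod A) (D : A →L[ℂ] M.carrier) : Prop :=
  ∀ a b : A, D (a * b) = M.lsmul a (D b) + M.rsmul b (D a)

/-- `D` is an inner derivation. -/
def IsInner (M : BBimod A) (D : A →L[ℂ] M.carrier) : Prop :=
  ∃ x : M.carrier, ∀ a : A, D a = M.lsmul a x - M.rsmul a x

/-- `D` is approximately inner: there is a net `(x_i)` in `M` with
`D a = lim_i (a·x_i − x_i·a)` for every `a`. -/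
def IsApproxInner (M : BBimod A) (D : A →L[ℂ] M.carrier) : Prop :=
  ∃ (ι : Type) (l : Filter ι) (x : ι → M.carrier), l.NeBot ∧
    ∀ a : A, Tendsto (fun i => M.lsmul a (x i) - M.rsmul a (x i)) l (𝓝 (D a))

variable (A)

/-- `A` is weakly amenable. -/
def WeaklyAmenable : Prop :=
  ∀ D : A →L[ℂ] (iterDual A 1).carrier, IsDerivation (iterDual A 1) D → IsInner (iterDual A 1) D

/-- `A` is approximately `n`-weakly amenable. -/
def ApproxNWeaklyAmenable (n : ℕ) : Prop :=
  ∀ D : A →L[ℂ] (iterDual A n).carrier,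
    IsDerivation (iterDual A n) D → IsApproxInner (iterDual A n) D

/-- `A` is `n`-weakly amenable. -/
def NWeaklyAmenable (n : ℕ) : Prop :=
  ∀ D : A →L[ℂ] (iterDual A n).carrier,
    IsDerivation (iterDual A n) D → IsInner (iterDual A n) D

/-- `A` is approximately weakly amenable. -/
def ApproxWeaklyAmenable : Prop := ApproxNWeaklyAmenable A 1

/-- `A` is approximately amenable: every continuous derivation into the dual of a
Banach `A`-bimodule is approximately inner. -/
def ApproxAmenable : Prop :=
  ∀ (X : BBimod A) (D : A →L[ℂ] X.dual.carrier), IsDerivation X.dual D → IsApproxInner X.dual D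

section Concrete
variable (A : Type) [NonUnitalNormedRing A] [NormedSpace ℂ A]
  [IsScalarTower ℂ A A] [SMulCommClass ℂ A A]

/-- The left action of `A` on its dual `A*`: `(a·f)(b) = f (b * a)`. -/
noncomputable def lact (a : A) (f : A →L[ℂ] ℂ) : A →L[ℂ] ℂ :=
  f.comp ((ContinuousLinearMap.mul ℂ A).flip a)

/-- The right action of `A` on its dual `A*`: `(f·a)(b) = f (a * b)`. -/
noncomputable def ract (a : A) (f : A →L[ℂ] ℂ) : A →L[ℂ] ℂ :=
  f.comp (ContinuousLinearMap.mul ℂ A a)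

variable [CompleteSpace A]

/-- `A` is approximately cyclic amenable: every continuous cyclic derivation
`D : A → A*` is approximately inner. -/
def ApproxCyclicAmenable : Prop :=
  ∀ D : A →L[ℂ] (A →L[ℂ] ℂ),
    (∀ a b : A, D (a * b) = lact A a (D b) + ract A b (D a)) →
    (∀ a b : A, D a b + D b a = 0) →
    ∃ (ι : Type) (l : Filter ι) (x : ι → (A →L[ℂ] ℂ)), l.NeBot ∧
      ∀ a : A, Tendsto (fun i => lact A a (x i) - ract A a (x i)) l (𝓝 (D a))

/-- `A` has a bounded (two-sided) approximate identity. -/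
def HasBAI : Prop :=
  ∃ (ι : Type) (l : Filter ι) (e : ι → A) (C : ℝ), l.NeBot ∧ (∀ i, ‖e i‖ ≤ C) ∧
    ∀ a : A, Tendsto (fun i => e i * a) l (𝓝 a) ∧ Tendsto (fun i => a * e i) l (𝓝 a)

end Concrete

/-!
Write `A⁺` for the unitization with the `ℓ¹`-norm, so that `(A⁺)* = ℂ e* ⊕ A*`. A derivation
`D : A⁺ → (A⁺)*` kills `e` and is determined by its restriction `d : A → A*` together with its unit
component `ψ a = ⟨e, D a⟩`, which must satisfy `ψ (a b) = ⟨b, d a⟩ + ⟨a, d b⟩`; conversely every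
such pair `(d, ψ)` defines a derivation of `A⁺`.

If `d` is approximately inner it is cyclic, so `ψ` vanishes on products and hence, by the
approximate identity `(e_j)`, on all of `A`. Conversely, for any derivation `d` a suitable `ψ` is a
weak-* cluster point of the bounded net `a ↦ ⟨e_j, d a⟩ + ⟨a, d e_j⟩` (Banach–Alaoglu). In both
directions the nets witnessing approximate innerness are transported by precomposition with
`A⁺ → A` or `A → A⁺`.
-/

namespace WithLp

section UnitizationCLM

variable (𝕜 : Type*) {A : Type*} [NormedField 𝕜] [NonUnitalNormedRing A] [NormedSpace 𝕜 A]

noncomputable def unitizationFstCLM : WithLp 1 (Unitization 𝕜 A) →L[𝕜] 𝕜 :=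
  LinearMap.mkContinuous { toFun x := (ofLp x).fst, map_add' _ _ := rfl, map_smul' _ _ := rfl } 1
    fun x => by
      rw [one_mul, unitization_norm_def]
      exact le_add_of_nonneg_right (norm_nonneg _)

noncomputable def unitizationSndCLM : WithLp 1 (Unitization 𝕜 A) →L[𝕜] A :=
  LinearMap.mkContinuous { toFun x := (ofLp x).snd, map_add' _ _ := rfl, map_smul' _ _ := rfl } 1
    fun x => by
      rw [one_mul, unitization_norm_def]
      exact le_add_of_nonneg_left (norm_nonneg _)

noncomputable def unitizationInrCLM : A →L[𝕜] WithLp 1 (Unitization 𝕜 A) :=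
  LinearMap.mkContinuous
    { toFun a := toLp 1 (a : Unitization 𝕜 A), map_add' _ _ := by simp, map_smul' _ _ := by simp }
    1 fun a => by simp [unitization_norm_inr]

variable {𝕜}

@[simp] lemma unitizationFstCLM_apply (x : WithLp 1 (Unitization 𝕜 A)) :
    unitizationFstCLM 𝕜 x = (ofLp x).fst := rfl

@[simp] lemma unitizationSndCLM_apply (x : WithLp 1 (Unitization 𝕜 A)) :
    unitizationSndCLM 𝕜 x = (ofLp x).snd := rfl

@[simp] lemma unitizationInrCLM_apply (a : A) :
    unitizationInrCLM 𝕜 a = toLp 1 (a : Unitization 𝕜 A) := rfl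

variable [IsScalarTower 𝕜 A A] [SMulCommClass 𝕜 A A]

lemma unitizationFstCLM_smul_one_add_inr_snd (x : WithLp 1 (Unitization 𝕜 A)) :
    unitizationFstCLM 𝕜 x • 1 + unitizationInrCLM 𝕜 (unitizationSndCLM 𝕜 x) = x := by
  apply (WithLp.equiv 1 _).injective
  simp [Algebra.smul_def, Unitization.algebraMap_eq_inl, Unitization.inl_fst_add_inr_snd_eq]

lemma unitizationInrCLM_mul (a b : A) :
    unitizationInrCLM 𝕜 (a * b) = unitizationInrCLM 𝕜 a * unitizationInrCLM 𝕜 b := by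
  apply (WithLp.equiv 1 _).injective
  simp [Unitization.inr_mul]

lemma unitizationFstCLM_mul (x y : WithLp 1 (Unitization 𝕜 A)) :
    unitizationFstCLM 𝕜 (x * y) = unitizationFstCLM 𝕜 x * unitizationFstCLM 𝕜 y :=
  Unitization.fst_mul _ _

lemma unitizationSndCLM_mul (x y : WithLp 1 (Unitization 𝕜 A)) :
    unitizationSndCLM 𝕜 (x * y) = unitizationFstCLM 𝕜 x • unitizationSndCLM 𝕜 y +
      unitizationFstCLM 𝕜 y • unitizationSndCLM 𝕜 x +
        unitizationSndCLM 𝕜 x * unitizationSndCLM 𝕜 y :=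
  Unitization.snd_mul _ _

end UnitizationCLM

end WithLp

open WithLp

section DualDerivation

variable {A B : Type} [NonUnitalNormedRing A] [NormedSpace ℂ A] [IsScalarTower ℂ A A]
  [SMulCommClass ℂ A A]

@[simp] lemma lact_apply (a : A) (f : A →L[ℂ] ℂ) (x : A) : lact A a f x = f (x * a) := rfl

@[simp] lemma ract_apply (a : A) (f : A →L[ℂ] ℂ) (x : A) : ract A a f x = f (a * x) := rfl

variable [CompleteSpace A]

lemma isDerivation_iterDual_one_iff (D : A →L[ℂ] (A →L[ℂ] ℂ)) :
    IsDerivation (iterDual A 1) D ↔ ∀ a b x, D (a * b) x = D b (x * a) + D a (b * x) :=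
  forall₂_congr fun _ _ => ContinuousLinearMap.ext_iff

lemma isApproxInner_iterDual_one_iff (D : A →L[ℂ] (A →L[ℂ] ℂ)) :
    IsApproxInner (iterDual A 1) D ↔ ∃ (ι : Type) (l : Filter ι) (x : ι → A →L[ℂ] ℂ), l.NeBot ∧
      ∀ a, Tendsto (fun i => lact A a (x i) - ract A a (x i)) l (𝓝 (D a)) :=
  Iff.rfl

lemma IsApproxInner.apply_add_apply_swap {D : A →L[ℂ] (A →L[ℂ] ℂ)}
    (hD : IsApproxInner (iterDual A 1) D) (a b : A) : D a b + D b a = 0 := by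
  obtain ⟨ι, l, x, hl, hx⟩ := (isApproxInner_iterDual_one_iff D).1 hD
  have hab := ((apply ℂ ℂ b).continuous.tendsto _).comp (hx a)
  have hba := ((apply ℂ ℂ a).continuous.tendsto _).comp (hx b)
  refine tendsto_nhds_unique (hab.add hba) ?_
  simp

variable [NonUnitalNormedRing B] [NormedSpace ℂ B] [IsScalarTower ℂ B B] [SMulCommClass ℂ B B]
  [CompleteSpace B]

lemma IsApproxInner.pullback {D : B →L[ℂ] (B →L[ℂ] ℂ)} (hD : IsApproxInner (iterDual B 1) D)
    {d : A →L[ℂ] (A →L[ℂ] ℂ)} (φ : A → B) (χ : A →L[ℂ] B)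
    (hχ : ∀ a b, χ (b * a) - χ (a * b) = χ b * φ a - φ a * χ b)
    (hd : ∀ a b, D (φ a) (χ b) = d a b) : IsApproxInner (iterDual A 1) d := by
  obtain ⟨ι, l, x, hl, hx⟩ := (isApproxInner_iterDual_one_iff D).1 hD
  refine (isApproxInner_iterDual_one_iff d).2 ⟨ι, l, fun i => (x i).comp χ, hl, fun a => ?_⟩
  have hcomm : ∀ i, lact A a ((x i).comp χ) - ract A a ((x i).comp χ) =
      ContinuousLinearMap.precomp ℂ χ (lact B (φ a) (x i) - ract B (φ a) (x i)) := by
    intro i; ext b; simp [← map_sub, hχ]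
  have hda : d a = ContinuousLinearMap.precomp ℂ χ (D (φ a)) := by ext b; simp [hd]
  rw [hda, funext hcomm]
  exact ((ContinuousLinearMap.precomp ℂ χ).continuous.tendsto _).comp (hx (φ a))

end DualDerivation

section BoundedApproximateIdentity

variable {A : Type} [NonUnitalNormedRing A] [NormedSpace ℂ A]

lemma HasBAI.eq_zero_of_map_mul_eq_zero (hA : HasBAI A) {F : Type*} [NormedAddCommGroup F]
    [NormedSpace ℂ F] (f : A →L[ℂ] F) (hf : ∀ a b, f (a * b) = 0) : f = 0 := by
  obtain ⟨ι, l, e, -, hl, -, he⟩ := hA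
  ext a
  exact tendsto_nhds_unique ((f.continuous.tendsto a).comp (he a).1)
    (by simp [Function.comp_def, hf])

variable [IsScalarTower ℂ A A] [SMulCommClass ℂ A A] [CompleteSpace A]

lemma HasBAI.exists_map_mul_eq_add_swap (hA : HasBAI A) {d : A →L[ℂ] (A →L[ℂ] ℂ)}
    (hd : IsDerivation (iterDual A 1) d) : ∃ ψ : A →L[ℂ] ℂ, ∀ a b, ψ (a * b) = d a b + d b a := by
  rw [isDerivation_iterDual_one_iff] at hd
  obtain ⟨ι, l, e, C, hl, he_le, he⟩ := hA
  let φ : ι → A →L[ℂ] ℂ := fun j => (apply ℂ ℂ (e j)).comp d + d (e j)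
  have hφ_apply : ∀ j a, φ j a = d a (e j) + d (e j) a := fun _ _ => rfl
  have hφ_le : ∀ j, ‖φ j‖ ≤ 2 * ‖d‖ * C := fun j => by
    have hC : 0 ≤ C := (norm_nonneg _).trans (he_le j)
    refine opNorm_le_bound _ (by positivity) fun a => ?_
    calc ‖d a (e j) + d (e j) a‖ ≤ ‖d‖ * ‖a‖ * ‖e j‖ + ‖d‖ * ‖e j‖ * ‖a‖ :=
          (norm_add_le _ _).trans (add_le_add (d.le_opNorm₂ a (e j)) (d.le_opNorm₂ (e j) a))
      _ = 2 * ‖d‖ * ‖e j‖ * ‖a‖ := by ring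
      _ ≤ 2 * ‖d‖ * C * ‖a‖ := by gcongr; exact he_le j
  obtain ⟨ψ, -, hψ⟩ :=
    (WeakDual.isCompact_closedBall (0 : A →L[ℂ] ℂ) (2 * ‖d‖ * C)).exists_mapClusterPt
      (u := StrongDual.toWeakDual ∘ φ) (f := l)
      (tendsto_principal.2 (.of_forall fun j => by simpa using hφ_le j))
  obtain ⟨U, hUl, hUψ⟩ := mapClusterPt_iff_ultrafilter.1 hψ
  refine ⟨ψ, fun a b =>
    tendsto_nhds_unique (((WeakDual.eval_continuous (a * b)).tendsto ψ).comp hUψ) ?_⟩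
  have hφ_mul : ∀ j, φ j (a * b) = d b (e j * a) + d (e j * a) b := fun j => by
    rw [hφ_apply, hd, hd]; ring
  have hcont : Continuous fun x => d b x + d x b := by fun_prop
  simpa [Function.comp_def, hφ_mul, add_comm] using ((hcont.tendsto a).comp (he a).1).mono_left hUl

end BoundedApproximateIdentity

section UnitizationDerivation

variable {A : Type} [NonUnitalNormedRing A] [NormedSpace ℂ A] [IsScalarTower ℂ A A]
  [SMulCommClass ℂ A A]

local notation "A⁺" => WithLp 1 (Unitization ℂ A)

noncomputable def unitizationDerivation (d : A →L[ℂ] (A →L[ℂ] ℂ)) (ψ : A →L[ℂ] ℂ) :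
    A⁺ →L[ℂ] (A⁺ →L[ℂ] ℂ) :=
  (ψ.comp (unitizationSndCLM ℂ)).smulRight (unitizationFstCLM ℂ) +
    (precomp ℂ (unitizationSndCLM ℂ)).comp (d.comp (unitizationSndCLM ℂ))

@[simp] lemma unitizationDerivation_apply (d : A →L[ℂ] (A →L[ℂ] ℂ)) (ψ : A →L[ℂ] ℂ) (u w : A⁺) :
    unitizationDerivation d ψ u w =
      ψ (unitizationSndCLM ℂ u) * unitizationFstCLM ℂ w +
        d (unitizationSndCLM ℂ u) (unitizationSndCLM ℂ w) :=
  rfl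

noncomputable def restrictDerivation (D : A⁺ →L[ℂ] (A⁺ →L[ℂ] ℂ)) : A →L[ℂ] (A →L[ℂ] ℂ) :=
  (precomp ℂ (unitizationInrCLM ℂ)).comp (D.comp (unitizationInrCLM ℂ))

noncomputable def unitComponent (D : A⁺ →L[ℂ] (A⁺ →L[ℂ] ℂ)) : A →L[ℂ] ℂ :=
  (apply ℂ ℂ 1).comp (D.comp (unitizationInrCLM ℂ))

@[simp] lemma restrictDerivation_apply (D : A⁺ →L[ℂ] (A⁺ →L[ℂ] ℂ)) (a b : A) :
    restrictDerivation D a b = D (unitizationInrCLM ℂ a) (unitizationInrCLM ℂ b) :=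
  rfl

@[simp] lemma unitComponent_apply (D : A⁺ →L[ℂ] (A⁺ →L[ℂ] ℂ)) (a : A) :
    unitComponent D a = D (unitizationInrCLM ℂ a) 1 :=
  rfl

variable [CompleteSpace A]

lemma isDerivation_unitizationDerivation {d : A →L[ℂ] (A →L[ℂ] ℂ)} {ψ : A →L[ℂ] ℂ}
    (hd : IsDerivation (iterDual A 1) d) (hψ : ∀ a b, ψ (a * b) = d a b + d b a) :
    IsDerivation (iterDual A⁺ 1) (unitizationDerivation d ψ) := by
  rw [isDerivation_iterDual_one_iff] at hd ⊢
  intro u v w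
  simp only [unitizationDerivation_apply, unitizationSndCLM_mul, unitizationFstCLM_mul, map_add,
    map_smul, add_apply, smul_apply, smul_eq_mul, hψ, hd]
  ring

lemma IsDerivation.map_one {B : Type} [NormedRing B] [NormedAlgebra ℂ B] [CompleteSpace B]
    {D : B →L[ℂ] (B →L[ℂ] ℂ)} (hD : IsDerivation (iterDual B 1) D) : D 1 = 0 := by
  rw [isDerivation_iterDual_one_iff] at hD
  ext w
  simpa using hD 1 1 w

lemma IsDerivation.restrict {D : A⁺ →L[ℂ] (A⁺ →L[ℂ] ℂ)}
    (hD : IsDerivation (iterDual A⁺ 1) D) : IsDerivation (iterDual A 1) (restrictDerivation D) := by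
  rw [isDerivation_iterDual_one_iff] at hD ⊢
  intro a b x
  simp only [restrictDerivation_apply, unitizationInrCLM_mul, hD]

lemma IsDerivation.unitComponent_mul {D : A⁺ →L[ℂ] (A⁺ →L[ℂ] ℂ)}
    (hD : IsDerivation (iterDual A⁺ 1) D) (a b : A) :
    unitComponent D (a * b) = restrictDerivation D a b + restrictDerivation D b a := by
  rw [isDerivation_iterDual_one_iff] at hD
  rw [unitComponent_apply, unitizationInrCLM_mul, hD, one_mul, mul_one, add_comm]
  rfl

lemma IsDerivation.eq_unitizationDerivation {D : A⁺ →L[ℂ] (A⁺ →L[ℂ] ℂ)}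
    (hD : IsDerivation (iterDual A⁺ 1) D) :
    D = unitizationDerivation (restrictDerivation D) (unitComponent D) := by
  ext u w
  conv_lhs =>
    rw [← unitizationFstCLM_smul_one_add_inr_snd u, ← unitizationFstCLM_smul_one_add_inr_snd w]
  simp [hD.map_one, mul_comm]

end UnitizationDerivation

namespace ApproxWeaklyAmenable

variable {A : Type} [NonUnitalNormedRing A] [NormedSpace ℂ A] [IsScalarTower ℂ A A]
  [SMulCommClass ℂ A A] [CompleteSpace A]

theorem unitization (hbai : HasBAI A) (hA : ApproxWeaklyAmenable A) :
    ApproxWeaklyAmenable (WithLp 1 (Unitization ℂ A)) := by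
  intro D hD
  have hd := hA _ hD.restrict
  have hψ : unitComponent D = 0 := hbai.eq_zero_of_map_mul_eq_zero _ fun a b => by
    rw [hD.unitComponent_mul, hd.apply_add_apply_swap]
  refine hd.pullback (unitizationSndCLM ℂ) (unitizationSndCLM ℂ) (fun u w => ?_) (fun u w => ?_)
  · simp only [unitizationSndCLM_mul]
    abel
  · rw [hD.eq_unitizationDerivation, hψ]
    simp

theorem of_unitization (hbai : HasBAI A)
    (hA : ApproxWeaklyAmenable (WithLp 1 (Unitization ℂ A))) : ApproxWeaklyAmenable A := by
  intro (d : A →L[ℂ] (A →L[ℂ] ℂ)) hd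
  obtain ⟨ψ, hψ⟩ := hbai.exists_map_mul_eq_add_swap hd
  refine (hA _ (isDerivation_unitizationDerivation hd hψ)).pullback (unitizationInrCLM ℂ)
    (unitizationInrCLM ℂ) (fun a b => by simp only [unitizationInrCLM_mul]) (fun a b => by simp)

end ApproxWeaklyAmenable

variable (A : Type) [NonUnitalNormedRing A] [NormedSpace ℂ A]
  [IsScalarTower ℂ A A] [SMulCommClass ℂ A A] [CompleteSpace A]

theorem approxWeaklyAmenable_iff_unitization
    (hbai : HasBAI A) :
    ApproxWeaklyAmenable A ↔ ApproxWeaklyAmenable (WithLp 1 (Unitization ℂ A)) :=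
  ⟨ApproxWeaklyAmenable.unitization hbai, ApproxWeaklyAmenable.of_unitization hbai⟩
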